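/- arXiv:1208.3865 — 3 statements merged into one kernel-verified Lean document; each statement's English description precedes it below -/
import Mathlib

section
/- Let V be an affine ℝ-variety, let K ⊆ V(ℝ) be a basic closed semialgebraic set that is Zariski dense in V, and assume that the saturated preordering 𝒫(K) in ℝ[V] is finitely generated. Then the following are equivalent: (i) for every n ∈ ℕ and every morphism φ : V → 𝔸ⁿ of ℝ-varieties, the moment relaxation for the closed convex hull of φ(K) becomes exact, i.e., the closure of conv(φ(K)) equals the closure of K_W for some choice of finite-dimensional subspaces W = (W₀, …, W_r); (ii) the preordering 𝒫(K) in ℝ[V] is stable. -/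
section MomentRelaxation

variable {A : Type} [CommRing A] [Algebra ℝ A]

/-- `a` is a sum of squares of elements of the subspace `W ⊆ A`. -/
def IsSumSqFrom (W : Submodule ℝ A) (a : A) : Prop :=
  ∃ (N : ℕ) (w : Fin N → A), (∀ j, w j ∈ W) ∧ a = ∑ j, w j * w j

/-- The truncated quadratic module `M_W = Σ_{W₀}·h₀ + Σ_{W₁}·h₁ + ⋯ + Σ_{W_r}·h_r`. -/
def truncQuadModule {r : ℕ} (h : Fin (r+1) → A) (W : Fin (r+1) → Submodule ℝ A) : Set A :=
  {f | ∃ σ : Fin (r+1) → A, (∀ i, IsSumSqFrom (W i) (σ i)) ∧ f = ∑ i, σ i * h i}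

/-- The quadratic module `M = Σ_A·h₀ + ⋯ + Σ_A·h_r` generated by `h₀, …, h_r`. -/
def quadModule {r : ℕ} (h : Fin (r+1) → A) : Set A :=
  truncQuadModule h (fun _ => (⊤ : Submodule ℝ A))

/-- The linear subspace `U = h₀·W₀W₀ + h₁·W₁W₁ + ⋯ + h_r·W_rW_r` of `A`
(recall `h 0 = 1`). -/
def relaxSpace {r : ℕ} (h : Fin (r+1) → A) (W : Fin (r+1) → Submodule ℝ A) :
    Submodule ℝ A :=
  Submodule.span ℝ {a | ∃ i, ∃ u ∈ W i, ∃ v ∈ W i, a = h i * (u * v)}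

/-- The relaxation `K_W ⊆ ℝⁿ`: the image, under the restriction map `ρ : U′ → L′` (encoded
via the coordinates `λ ↦ (λ(x₁), …, λ(x_n))`), of the set of linear functionals
`λ ∈ U′` that are nonnegative on `M_W` and satisfy `λ(1) = 1`. -/
def relaxSet {n r : ℕ} (x : Fin n → A) (h : Fin (r+1) → A)
    (W : Fin (r+1) → Submodule ℝ A)
    (h1 : (1:A) ∈ relaxSpace h W) (hx : ∀ i, x i ∈ relaxSpace h W) :
    Set (Fin n → ℝ) :=
  {η | ∃ lam : Module.Dual ℝ ↥(relaxSpace h W),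
    (∀ g : ↥(relaxSpace h W), (g : A) ∈ truncQuadModule h W → 0 ≤ lam g) ∧
    lam ⟨1, h1⟩ = 1 ∧ ∀ i, η i = lam ⟨x i, hx i⟩}

end MomentRelaxation

/-!
(ii) ⇒ (i): after enlarging the degree bounds so that `1, x₁, …, x_n ∈ U`, an affine function
`u - ℓ` that is nonnegative on `φ(K)` is an element of `𝒫(K) ∩ span(1, x)`, hence of `M_W`, hence
nonnegative on `K_W`; by Hahn–Banach, `K_W ⊆ cl conv φ(K)`.

(i) ⇒ (ii): take `x` spanning `L`. Since `K` is Zariski dense and `A` is reduced,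
`∑ᵢ hᵢ ∑ⱼ wᵢⱼ² = 0` forces `hᵢ wᵢⱼ = 0`. Hence the Gram-matrix parametrization of `M_W` is a
quadratic map that vanishes only on its radical, so it is proper modulo the radical and `M_W` is
closed in the finite-dimensional space `U`. If `f ∈ 𝒫(K) ∩ L` were not in `M_W`, some `λ ≥ 0` on
`M_W` would have `λ(f) < 0`. Perturbing `λ` by the evaluation at a point `ξ₀ ∈ K` and normalizing
gives points of `K_W ⊆ cl conv φ(K)`, where the linear form defined by `f` is nonnegative; letting
the perturbation tend to zero yields `λ(f) ≥ 0`.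
-/

open Set Submodule

section Anisotropic

variable {E F : Type*} [NormedAddCommGroup E] [NormedSpace ℝ E] [FiniteDimensional ℝ E]
  [NormedAddCommGroup F] [NormedSpace ℝ F]

theorem LinearMap.continuous_apply_self (β : E →ₗ[ℝ] E →ₗ[ℝ] F) :
    Continuous fun x => β x x :=
  (β.toContinuousBilinearMap.continuous).clm_apply continuous_id

theorem LinearMap.exists_pos_mul_sq_le_norm_apply_self (β : E →ₗ[ℝ] E →ₗ[ℝ] F)
    (hβ : ∀ x, β x x = 0 → x = 0) : ∃ m > 0, ∀ x, m * ‖x‖ ^ 2 ≤ ‖β x x‖ := by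
  obtain ⟨m, hm, hmin⟩ := (isCompact_sphere (0 : E) 1).exists_forall_le'
    (continuous_norm.comp β.continuous_apply_self).continuousOn (a := 0) fun x hx =>
      norm_pos_iff.mpr fun h => by simp [hβ x h] at hx
  refine ⟨m, hm, fun x => ?_⟩
  rcases eq_or_ne x 0 with rfl | hx
  · simp
  have hx' : 0 < ‖x‖ := norm_pos_iff.mpr hx
  have hunit : ‖x‖⁻¹ • x ∈ Metric.sphere (0 : E) 1 := by
    simp [norm_smul, hx'.ne']
  have hscale : β x x = (‖x‖ ^ 2) • β (‖x‖⁻¹ • x) (‖x‖⁻¹ • x) := by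
    simp only [map_smul, LinearMap.smul_apply, smul_smul]
    rw [show ‖x‖ ^ 2 * (‖x‖⁻¹ * ‖x‖⁻¹) = 1 by field_simp, one_smul]
  rw [hscale, norm_smul, Real.norm_of_nonneg (by positivity), mul_comm]
  exact mul_le_mul_of_nonneg_left (hmin _ hunit) (by positivity)

theorem LinearMap.isClosed_range_apply_self_of_anisotropic (β : E →ₗ[ℝ] E →ₗ[ℝ] F)
    (hβ : ∀ x, β x x = 0 → x = 0) : IsClosed (Set.range fun x => β x x) := by
  obtain ⟨m, hm, hcoer⟩ := β.exists_pos_mul_sq_le_norm_apply_self hβ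
  have hproper : IsProperMap fun x => β x x := by
    refine isProperMap_iff_tendsto_cocompact.mpr ⟨β.continuous_apply_self,
      Filter.tendsto_cocompact_cocompact_of_norm fun ε => ⟨max 1 (ε / m), fun x hx => ?_⟩⟩
    have h1 : 1 < ‖x‖ := (le_max_left _ _).trans_lt hx
    have h2 : ε / m < ‖x‖ := (le_max_right _ _).trans_lt hx
    have h3 : ε < m * ‖x‖ := by rwa [div_lt_iff₀' hm] at h2
    have h4 : m * ‖x‖ ≤ m * ‖x‖ ^ 2 := by
      rw [sq]; exact mul_le_mul_of_nonneg_left (le_mul_of_one_le_left (by linarith) h1.le) hm.le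
    linarith [hcoer x]
  exact hproper.isClosedMap.isClosed_range

theorem LinearMap.isClosed_range_apply_self (β : E →ₗ[ℝ] E →ₗ[ℝ] F)
    (hβ : ∀ x, β x x = 0 → ∀ y, β x y = 0 ∧ β y x = 0) : IsClosed (Set.range fun x => β x x) := by
  let N : Submodule ℝ E := LinearMap.ker β ⊓ LinearMap.ker β.flip
  obtain ⟨P, hNP⟩ := N.exists_isCompl
  let βP := β.compl₁₂ P.subtype P.subtype
  have hrange : (Set.range fun x => β x x) = Set.range fun p => βP p p := by
    refine (range_subset_iff.mpr fun x => ?_).antisymm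
      (range_subset_iff.mpr fun p => ⟨p, rfl⟩)
    obtain ⟨n, p, hn, hp, rfl⟩ := Submodule.codisjoint_iff_exists_add_eq.mp hNP.codisjoint x
    have hn' : β n = 0 ∧ β.flip n = 0 := hn
    refine ⟨⟨p, hp⟩, ?_⟩
    have hpn : β p n = 0 := by rw [← β.flip_apply, hn'.2, LinearMap.zero_apply]
    simp [βP, hn'.1, hpn]
  rw [hrange]
  refine βP.isClosed_range_apply_self_of_anisotropic fun p hp => ?_
  have hpN : (p : E) ∈ N := by
    constructor <;> ext y <;> simp [(hβ p hp y).1, (hβ p hp y).2]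
  exact Subtype.ext (Submodule.disjoint_def.mp hNP.disjoint _ hpN p.2)

end Anisotropic

theorem PointedCone.exists_dual_nonneg_of_notMem {U : Type*} [AddCommGroup U] [Module ℝ U]
    {d : ℕ} (e : U ≃ₗ[ℝ] (Fin d → ℝ)) {C : PointedCone ℝ U} (hC : IsClosed (e '' C)) {f : U}
    (hf : f ∉ C) : ∃ μ : Module.Dual ℝ U, (∀ g ∈ C, 0 ≤ μ g) ∧ μ f < 0 := by
  let C' : ProperCone ℝ (Fin d → ℝ) := ⟨C.map e.toLinearMap, hC⟩
  obtain ⟨φ, hφC, hφf⟩ := C'.hyperplane_separation_point (x₀ := e f)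
    fun ⟨g, hg, hgf⟩ => hf (e.injective hgf ▸ hg)
  exact ⟨φ.toLinearMap ∘ₗ e.toLinearMap, fun g hg => hφC _ ⟨g, hg, rfl⟩, hφf⟩

theorem nonneg_of_forall_pos_nonneg_add_mul {a b : ℝ} (h : ∀ ε > 0, 0 ≤ a + ε * b) : 0 ≤ a := by
  have hlim : Filter.Tendsto (fun ε => a + ε * b) (nhdsWithin 0 (Ioi 0)) (nhds a) := by
    have hcont : Continuous fun ε : ℝ => a + ε * b := by fun_prop
    simpa using (hcont.tendsto 0).mono_left nhdsWithin_le_nhds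
  exact ge_of_tendsto hlim (eventually_nhdsWithin_of_forall h)

theorem LinearMap.apply_sum_smul_single {M : Type*} [AddCommGroup M] [Module ℝ M] {n : ℕ}
    (ν : M →ₗ[ℝ] ℝ) (ℓ : (Fin n → ℝ) →ₗ[ℝ] ℝ) (y : Fin n → M) :
    ν (∑ i, ℓ (Pi.single i 1) • y i) = ℓ fun i => ν (y i) := by
  rw [map_sum, LinearMap.pi_apply_eq_sum_univ ℓ]
  refine Finset.sum_congr rfl fun i _ => ?_
  simp only [map_smul, smul_eq_mul, mul_comm (ν (y i))]
  congr 2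
  ext j
  simp [Pi.single_apply, eq_comm]

theorem Module.Dual.apply_nonneg_of_forall_normalized {U : Type*} [AddCommGroup U] [Module ℝ U]
    {C : Set U} {u f : U} (hu : u ∈ C) {ν : Module.Dual ℝ U} (hν : ∀ g ∈ C, 0 ≤ ν g)
    (hνu : ν u = 1) (hf : ∀ μ : Module.Dual ℝ U, (∀ g ∈ C, 0 ≤ μ g) → μ u = 1 → 0 ≤ μ f)
    {μ : Module.Dual ℝ U} (hμ : ∀ g ∈ C, 0 ≤ μ g) : 0 ≤ μ f := by
  refine nonneg_of_forall_pos_nonneg_add_mul (b := ν f) fun ε hε => ?_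
  have hpos : 0 < μ u + ε := by linarith [hμ u hu]
  have happly : ∀ g, ((μ u + ε)⁻¹ • (μ + ε • ν)) g = (μ u + ε)⁻¹ * (μ g + ε * ν g) :=
    fun g => rfl
  have hnonneg : ∀ g ∈ C, 0 ≤ ((μ u + ε)⁻¹ • (μ + ε • ν)) g := fun g hg => by
    rw [happly]
    exact mul_nonneg (inv_nonneg.mpr hpos.le) (add_nonneg (hμ g hg) (mul_nonneg hε.le (hν g hg)))
  have hnorm : ((μ u + ε)⁻¹ • (μ + ε • ν)) u = 1 := by
    rw [happly, hνu, mul_one, inv_mul_cancel₀ hpos.ne']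
  have := hf _ hnonneg hnorm
  rwa [happly, mul_nonneg_iff_of_pos_left (inv_pos.mpr hpos)] at this

theorem LinearMap.nonneg_of_mem_closure_convexHull {E : Type*} [NormedAddCommGroup E]
    [NormedSpace ℝ E] [FiniteDimensional ℝ E] (ℓ : E →ₗ[ℝ] ℝ) {S : Set E}
    (hS : ∀ z ∈ S, 0 ≤ ℓ z) {z : E} (hz : z ∈ closure (convexHull ℝ S)) : 0 ≤ ℓ z :=
  closure_minimal (convexHull_min hS ((convex_Ici 0).linear_preimage ℓ))
    (isClosed_Ici.preimage ℓ.continuous_of_finiteDimensional) hz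

section TruncatedQuadraticModule

variable {A : Type} [CommRing A] [Algebra ℝ A]

theorem IsSumSqFrom.zero (W : Submodule ℝ A) : IsSumSqFrom W 0 :=
  ⟨0, Fin.elim0, fun j => j.elim0, by simp⟩

theorem isSumSqFrom_mul_self {W : Submodule ℝ A} {w : A} (hw : w ∈ W) :
    IsSumSqFrom W (w * w) :=
  ⟨1, fun _ => w, fun _ => hw, by simp⟩

theorem IsSumSqFrom.add {W : Submodule ℝ A} {a b : A} (ha : IsSumSqFrom W a)
    (hb : IsSumSqFrom W b) : IsSumSqFrom W (a + b) := by
  obtain ⟨N, w, hw, rfl⟩ := ha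
  obtain ⟨M, v, hv, rfl⟩ := hb
  refine ⟨N + M, Fin.append w v, fun j => Fin.addCases (by simpa using hw) (by simpa using hv) j,
    ?_⟩
  simp [Fin.sum_univ_add]

theorem IsSumSqFrom.smul {W : Submodule ℝ A} {a : A} {t : ℝ} (ht : 0 ≤ t)
    (ha : IsSumSqFrom W a) : IsSumSqFrom W (t • a) := by
  obtain ⟨N, w, hw, rfl⟩ := ha
  refine ⟨N, fun j => √t • w j, fun j => W.smul_mem _ (hw j), ?_⟩
  simp only [Finset.smul_sum, smul_mul_smul_comm, Real.mul_self_sqrt ht]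

theorem IsSumSqFrom.mono {W W' : Submodule ℝ A} (hWW' : W ≤ W') {a : A}
    (ha : IsSumSqFrom W a) : IsSumSqFrom W' a := by
  obtain ⟨N, w, hw, rfl⟩ := ha
  exact ⟨N, w, fun j => hWW' (hw j), rfl⟩

theorem sum_linearCombination_mul_self {ι : Type*} [Fintype ι] {m : ℕ} (b : Fin m → A)
    (C : Matrix ι (Fin m) ℝ) :
    ∑ j, Fintype.linearCombination ℝ b (C j) * Fintype.linearCombination ℝ b (C j)
      = ∑ k, ∑ l, (C.conjTranspose * C) k l • (b k * b l) := by
  simp only [Fintype.linearCombination_apply, Finset.sum_mul_sum, smul_mul_smul_comm,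
    Matrix.mul_apply, Matrix.conjTranspose_apply, star_trivial, Finset.sum_smul]
  rw [Finset.sum_comm]
  exact Finset.sum_congr rfl fun k _ => Finset.sum_comm

open scoped MatrixOrder in
theorem IsSumSqFrom.exists_eq_sum_linearCombination_mul_self {m : ℕ} {b : Fin m → A} {a : A}
    (ha : IsSumSqFrom (span ℝ (range b)) a) :
    ∃ B : Fin m → Fin m → ℝ,
      a = ∑ j, Fintype.linearCombination ℝ b (B j) * Fintype.linearCombination ℝ b (B j) := by
  obtain ⟨N, w, hw, rfl⟩ := ha
  choose C hC using fun j => (mem_span_range_iff_exists_fun ℝ).mp (hw j)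
  obtain ⟨B, hB⟩ := CStarAlgebra.nonneg_iff_eq_star_mul_self.mp
    (Matrix.posSemidef_conjTranspose_mul_self (C : Matrix (Fin N) (Fin m) ℝ)).nonneg
  -- `∑ⱼ wⱼ²` depends only on the Gram matrix `CᴴC`, which is also `BᴴB` for a square `B`
  refine ⟨B, ?_⟩
  simp only [← hC, ← Fintype.linearCombination_apply]
  rw [sum_linearCombination_mul_self b C, sum_linearCombination_mul_self b B]
  rw [hB, Matrix.star_eq_conjTranspose]

variable {r : ℕ}

def truncQuadCone (h : Fin (r+1) → A) (W : Fin (r+1) → Submodule ℝ A) : PointedCone ℝ A where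
  carrier := truncQuadModule h W
  zero_mem' := ⟨0, fun i => IsSumSqFrom.zero _, by simp⟩
  add_mem' := by
    rintro _ _ ⟨σ, hσ, rfl⟩ ⟨τ, hτ, rfl⟩
    exact ⟨σ + τ, fun i => (hσ i).add (hτ i), by simp [add_mul, Finset.sum_add_distrib]⟩
  smul_mem' := by
    rintro ⟨t, ht⟩ _ ⟨σ, hσ, rfl⟩
    exact ⟨t • σ, fun i => (hσ i).smul ht, by simp [Finset.smul_sum]⟩

theorem mem_truncQuadCone {h : Fin (r+1) → A} {W : Fin (r+1) → Submodule ℝ A} {a : A} :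
    a ∈ truncQuadCone h W ↔ a ∈ truncQuadModule h W :=
  Iff.rfl

theorem truncQuadModule_mono {h : Fin (r+1) → A} {W W' : Fin (r+1) → Submodule ℝ A}
    (hWW' : ∀ i, W i ≤ W' i) : truncQuadModule h W ⊆ truncQuadModule h W' := by
  rintro f ⟨σ, hσ, rfl⟩
  exact ⟨σ, fun i => (hσ i).mono (hWW' i), rfl⟩

theorem one_mem_truncQuadModule {h : Fin (r+1) → A} (h0 : h 0 = 1)
    {W : Fin (r+1) → Submodule ℝ A} (hW : (1 : A) ∈ W 0) : (1 : A) ∈ truncQuadModule h W := by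
  classical
  refine ⟨Pi.single 0 1, fun i => ?_, by simp [Pi.single_apply, h0]⟩
  rcases eq_or_ne i 0 with rfl | hi
  · simpa using isSumSqFrom_mul_self hW
  · simpa [hi] using IsSumSqFrom.zero (W i)

theorem AlgHom.apply_nonneg_of_mem_truncQuadModule {h : Fin (r+1) → A}
    {W : Fin (r+1) → Submodule ℝ A} (ξ : A →ₐ[ℝ] ℝ) (hξ : ∀ i, 0 ≤ ξ (h i)) {g : A}
    (hg : g ∈ truncQuadModule h W) : 0 ≤ ξ g := by
  obtain ⟨σ, hσ, rfl⟩ := hg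
  rw [map_sum]
  refine Finset.sum_nonneg fun i _ => ?_
  obtain ⟨N, w, -, hw⟩ := hσ i
  rw [map_mul, hw, map_sum]
  exact mul_nonneg (Finset.sum_nonneg fun j _ => by rw [map_mul]; exact mul_self_nonneg _) (hξ i)

theorem mul_mem_relaxSpace {h : Fin (r+1) → A} {W : Fin (r+1) → Submodule ℝ A}
    {i : Fin (r+1)} {u v : A} (hu : u ∈ W i) (hv : v ∈ W i) :
    h i * (u * v) ∈ relaxSpace h W :=
  subset_span ⟨i, u, hu, v, hv, rfl⟩

theorem relaxSpace_mono {h : Fin (r+1) → A} {W W' : Fin (r+1) → Submodule ℝ A}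
    (hWW' : ∀ i, W i ≤ W' i) : relaxSpace h W ≤ relaxSpace h W' :=
  span_mono fun _ ⟨i, u, hu, v, hv, hx⟩ => ⟨i, u, hWW' i hu, v, hWW' i hv, hx⟩

theorem relaxSpace_finiteDimensional (h : Fin (r+1) → A) {W : Fin (r+1) → Submodule ℝ A}
    (hW : ∀ i, FiniteDimensional ℝ (W i)) : FiniteDimensional ℝ (relaxSpace h W) := by
  have hle : relaxSpace h W ≤ ⨆ i, (W i * W i).map (LinearMap.mulLeft ℝ (h i)) :=
    span_le.mpr fun _ ⟨i, u, hu, v, hv, hx⟩ =>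
      hx ▸ mem_iSup_of_mem i (mem_map_of_mem (mul_mem_mul hu hv))
  have : ∀ i, FiniteDimensional ℝ (W i * W i) := fun i =>
    Module.Finite.iff_fg.mpr ((Module.Finite.iff_fg.mp (hW i)).mul (Module.Finite.iff_fg.mp (hW i)))
  exact finiteDimensional_of_le hle

theorem relaxSet_convex {n : ℕ} (x : Fin n → A) (h : Fin (r+1) → A)
    (W : Fin (r+1) → Submodule ℝ A) (h1 : (1 : A) ∈ relaxSpace h W)
    (hx : ∀ i, x i ∈ relaxSpace h W) : Convex ℝ (relaxSet x h W h1 hx) := by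
  rintro _ ⟨μ, hμ, hμ1, hημ⟩ _ ⟨ν, hν, hν1, hην⟩ a b ha hb hab
  refine ⟨a • μ + b • ν, fun g hg => ?_, by simp [hμ1, hν1, hab], fun i => by simp [hημ, hην]⟩
  simpa using add_nonneg (mul_nonneg ha (hμ g hg)) (mul_nonneg hb (hν g hg))

theorem apply_mem_relaxSet {n : ℕ} {x : Fin n → A} {h : Fin (r+1) → A}
    {W : Fin (r+1) → Submodule ℝ A} {h1 : (1 : A) ∈ relaxSpace h W}
    {hx : ∀ i, x i ∈ relaxSpace h W} (ξ : A →ₐ[ℝ] ℝ) (hξ : ∀ i, 0 ≤ ξ (h i)) :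
    (fun i => ξ (x i)) ∈ relaxSet x h W h1 hx :=
  ⟨ξ.toLinearMap ∘ₗ (relaxSpace h W).subtype,
    fun _ hg => ξ.apply_nonneg_of_mem_truncQuadModule hξ hg, by simp, fun _ => rfl⟩

theorem relaxSet_anti {n : ℕ} {x : Fin n → A} {h : Fin (r+1) → A}
    {W W' : Fin (r+1) → Submodule ℝ A} (hWW' : ∀ i, W i ≤ W' i)
    {h1 : (1 : A) ∈ relaxSpace h W} {hx : ∀ i, x i ∈ relaxSpace h W}
    {h1' : (1 : A) ∈ relaxSpace h W'} {hx' : ∀ i, x i ∈ relaxSpace h W'} :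
    relaxSet x h W' h1' hx' ⊆ relaxSet x h W h1 hx := by
  rintro _ ⟨μ, hμ, hμ1, hη⟩
  exact ⟨μ ∘ₗ inclusion (relaxSpace_mono hWW'), fun g hg => hμ _ (truncQuadModule_mono hWW' hg),
    hμ1, hη⟩

theorem convexHull_image_subset_relaxSet {n : ℕ} (x : Fin n → A) (h : Fin (r+1) → A)
    (W : Fin (r+1) → Submodule ℝ A) (h1 : (1 : A) ∈ relaxSpace h W)
    (hx : ∀ i, x i ∈ relaxSpace h W) :
    convexHull ℝ ((fun ξ : A →ₐ[ℝ] ℝ => fun i => ξ (x i)) '' {ξ | ∀ i, 0 ≤ ξ (h i)})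
      ⊆ relaxSet x h W h1 hx :=
  convexHull_min (image_subset_iff.mpr fun ξ hξ => apply_mem_relaxSet ξ hξ)
    (relaxSet_convex x h W h1 hx)

variable {m : Fin (r+1) → ℕ}

noncomputable def gramForm (h : Fin (r+1) → A) (b : ∀ i, Fin (m i) → A) :
    (∀ i, Fin (m i) → Fin (m i) → ℝ) →ₗ[ℝ] (∀ i, Fin (m i) → Fin (m i) → ℝ) →ₗ[ℝ] A :=
  ∑ i, ∑ j, (LinearMap.mul ℝ A).compl₁₂
    (LinearMap.mulLeft ℝ (h i) ∘ₗ Fintype.linearCombination ℝ (b i) ∘ₗ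
      LinearMap.proj j ∘ₗ LinearMap.proj i)
    (Fintype.linearCombination ℝ (b i) ∘ₗ LinearMap.proj j ∘ₗ LinearMap.proj i)

theorem gramForm_apply (h : Fin (r+1) → A) (b : ∀ i, Fin (m i) → A)
    (B C : ∀ i, Fin (m i) → Fin (m i) → ℝ) :
    gramForm h b B C = ∑ i, h i * ∑ j,
      Fintype.linearCombination ℝ (b i) (B i j) * Fintype.linearCombination ℝ (b i) (C i j) := by
  simp [gramForm, Finset.mul_sum, mul_assoc]

theorem linearCombination_mem_span {ι : Type*} [Fintype ι] (v : ι → A) (c : ι → ℝ) :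
    Fintype.linearCombination ℝ v c ∈ span ℝ (range v) :=
  Fintype.range_linearCombination ℝ v ▸ LinearMap.mem_range_self _ c

theorem truncQuadModule_span_eq_range_gramForm (h : Fin (r+1) → A) (b : ∀ i, Fin (m i) → A) :
    truncQuadModule h (fun i => span ℝ (range (b i))) = range fun B => gramForm h b B B := by
  ext a
  constructor
  · rintro ⟨σ, hσ, rfl⟩
    choose B hB using fun i => (hσ i).exists_eq_sum_linearCombination_mul_self
    exact ⟨B, by simp only [gramForm_apply, hB, mul_comm]⟩
  · rintro ⟨B, rfl⟩
    refine ⟨fun i => ∑ j, Fintype.linearCombination ℝ (b i) (B i j) *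
      Fintype.linearCombination ℝ (b i) (B i j),
      fun i => ⟨_, _, fun j => linearCombination_mem_span _ _, rfl⟩, ?_⟩
    simp only [gramForm_apply, mul_comm]

theorem gramForm_mem_relaxSpace (h : Fin (r+1) → A) (b : ∀ i, Fin (m i) → A)
    (B C : ∀ i, Fin (m i) → Fin (m i) → ℝ) :
    gramForm h b B C ∈ relaxSpace h (fun i => span ℝ (range (b i))) := by
  rw [gramForm_apply]
  refine sum_mem fun i _ => ?_
  rw [Finset.mul_sum]
  exact sum_mem fun j _ =>
    mul_mem_relaxSpace (linearCombination_mem_span _ _) (linearCombination_mem_span _ _)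

theorem mul_eq_zero_of_sum_mul_sum_mul_self_eq_zero [IsReduced A] {h : Fin (r+1) → A}
    (hdense : ∀ f : A, (∀ ξ : A →ₐ[ℝ] ℝ, (∀ i, 0 ≤ ξ (h i)) → ξ f = 0) → f = 0)
    {ι : Fin (r+1) → Type*} [∀ i, Fintype (ι i)] {v : ∀ i, ι i → A}
    (hv : ∑ i, h i * ∑ j, v i j * v i j = 0) (i : Fin (r+1)) (j : ι i) : h i * v i j = 0 := by
  have hsq : h i * (v i j * v i j) = 0 := hdense _ fun ξ hξ => by
    have hterms := (Finset.sum_eq_zero_iff_of_nonneg fun i _ =>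
      mul_nonneg (hξ i) (Finset.sum_nonneg fun j _ => mul_self_nonneg (ξ (v i j)))).mp
      (by simpa using congrArg ξ hv) i (Finset.mem_univ _)
    rcases mul_eq_zero.mp hterms with hhi | hvi
    · simp [hhi]
    · have := (Finset.sum_eq_zero_iff_of_nonneg fun j _ => mul_self_nonneg (ξ (v i j))).mp hvi j
        (Finset.mem_univ _)
      simp [this]
  exact IsReduced.eq_zero _ ⟨2, by linear_combination h i * hsq⟩

theorem isClosed_image_truncQuadCone [IsReduced A] {h : Fin (r+1) → A}
    (hdense : ∀ f : A, (∀ ξ : A →ₐ[ℝ] ℝ, (∀ i, 0 ≤ ξ (h i)) → ξ f = 0) → f = 0)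
    {W : Fin (r+1) → Submodule ℝ A} (hW : ∀ i, FiniteDimensional ℝ (W i)) {d : ℕ}
    (e : relaxSpace h W ≃ₗ[ℝ] (Fin d → ℝ)) :
    IsClosed (e '' (truncQuadCone h W).comap (relaxSpace h W).subtype) := by
  choose m b hb using fun i =>
    fg_iff_exists_fin_generating_family.mp (Module.Finite.iff_fg.mp (hW i))
  obtain rfl : W = fun i => span ℝ (range (b i)) := funext fun i => (hb i).symm
  let β := LinearMap.codRestrict₂ (gramForm h b) (relaxSpace h _).subtype Subtype.val_injective
    fun B C => ⟨⟨_, gramForm_mem_relaxSpace h b B C⟩, rfl⟩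
  have hβ : ∀ B C, (β B C : A) = gramForm h b B C := fun B C =>
    LinearMap.codRestrict₂_apply (gramForm h b) (relaxSpace h _).subtype _ _ B C
  have hrange : e '' (truncQuadCone h (fun i => span ℝ (range (b i)))).comap
      (relaxSpace h (fun i => span ℝ (range (b i)))).subtype
      = range fun B => (β.compr₂ e.toLinearMap) B B := by
    ext y
    simp only [mem_image, SetLike.mem_coe, PointedCone.mem_comap, mem_truncQuadCone,
      truncQuadModule_span_eq_range_gramForm, mem_range, LinearMap.compr₂_apply]
    constructor
    · rintro ⟨g, ⟨B, hB⟩, rfl⟩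
      exact ⟨B, congrArg e (Subtype.ext ((hβ B B).trans hB))⟩
    · rintro ⟨B, rfl⟩
      exact ⟨β B B, ⟨B, (hβ B B).symm⟩, rfl⟩
  rw [hrange]
  refine LinearMap.isClosed_range_apply_self _ fun B hB C => ?_
  have hB' : gramForm h b B B = 0 := by simpa [← hβ] using hB
  rw [gramForm_apply] at hB'
  have hann := mul_eq_zero_of_sum_mul_sum_mul_self_eq_zero hdense hB'
  have hBC : β B C = 0 ∧ β C B = 0 := by
    simp only [← Subtype.val_inj, hβ, gramForm_apply, Finset.mul_sum, ← mul_assoc, hann, zero_mul,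
      mul_comm _ (Fintype.linearCombination ℝ (b _) (B _ _)), Finset.sum_const_zero,
      ZeroMemClass.coe_zero, and_self]
  simp [hBC]

theorem exists_dual_nonneg_of_notMem_truncQuadModule [IsReduced A] {h : Fin (r+1) → A}
    (hdense : ∀ f : A, (∀ ξ : A →ₐ[ℝ] ℝ, (∀ i, 0 ≤ ξ (h i)) → ξ f = 0) → f = 0)
    {W : Fin (r+1) → Submodule ℝ A} (hW : ∀ i, FiniteDimensional ℝ (W i))
    {f : relaxSpace h W} (hf : (f : A) ∉ truncQuadModule h W) :
    ∃ μ : Module.Dual ℝ (relaxSpace h W),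
      (∀ g : relaxSpace h W, (g : A) ∈ truncQuadModule h W → 0 ≤ μ g) ∧ μ f < 0 :=
  have := relaxSpace_finiteDimensional h hW
  PointedCone.exists_dual_nonneg_of_notMem (Module.finBasis ℝ _).equivFun
    (isClosed_image_truncQuadCone hdense hW _) hf

end TruncatedQuadraticModule

section Stability

variable {A : Type} [CommRing A] [Algebra ℝ A] {r : ℕ}

def IsStable (h : Fin (r+1) → A) : Prop :=
  ∀ L : Submodule ℝ A, FiniteDimensional ℝ L →
    ∃ W : Fin (r+1) → Submodule ℝ A, (∀ i, FiniteDimensional ℝ (W i)) ∧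
      ∀ f : A, (∀ ξ : A →ₐ[ℝ] ℝ, (∀ i, 0 ≤ ξ (h i)) → 0 ≤ ξ f) → f ∈ L → f ∈ truncQuadModule h W

def IsMomentRelaxationExact (h : Fin (r+1) → A) {n : ℕ} (x : Fin n → A) : Prop :=
  ∃ W : Fin (r+1) → Submodule ℝ A, (∀ i, FiniteDimensional ℝ (W i)) ∧
    ∃ (h1 : (1 : A) ∈ relaxSpace h W) (hx : ∀ i, x i ∈ relaxSpace h W),
      closure (convexHull ℝ ((fun ξ : A →ₐ[ℝ] ℝ => fun i => ξ (x i)) '' {ξ | ∀ i, 0 ≤ ξ (h i)}))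
        = closure (relaxSet x h W h1 hx)

theorem relaxSet_subset_closure_convexHull {n : ℕ} {x : Fin n → A} {h : Fin (r+1) → A}
    {W : Fin (r+1) → Submodule ℝ A} {h1 : (1 : A) ∈ relaxSpace h W}
    {hx : ∀ i, x i ∈ relaxSpace h W}
    (hW : ∀ f ∈ span ℝ (insert 1 (range x)),
      (∀ ξ : A →ₐ[ℝ] ℝ, (∀ i, 0 ≤ ξ (h i)) → 0 ≤ ξ f) → f ∈ truncQuadModule h W) :
    relaxSet x h W h1 hx ⊆ closure (convexHull ℝ
      ((fun ξ : A →ₐ[ℝ] ℝ => fun i => ξ (x i)) '' {ξ | ∀ i, 0 ≤ ξ (h i)})) := by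
  rintro η ⟨μ, hμ, hμ1, hη⟩
  obtain rfl : η = fun i => μ ⟨x i, hx i⟩ := funext hη
  by_contra hη'
  obtain ⟨ℓ, u, hℓ, hu⟩ :=
    geometric_hahn_banach_closed_point (convex_convexHull ℝ _).closure isClosed_closure hη'
  let g : A := u • 1 - ∑ i, ℓ (Pi.single i 1) • x i
  have hgL : g ∈ span ℝ (insert 1 (range x)) :=
    sub_mem (smul_mem _ _ (subset_span (mem_insert _ _)))
      (sum_mem fun i _ => smul_mem _ _ (subset_span (mem_insert_of_mem _ ⟨i, rfl⟩)))
  have hgK : ∀ ξ : A →ₐ[ℝ] ℝ, (∀ i, 0 ≤ ξ (h i)) → 0 ≤ ξ g := fun ξ hξ => by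
    have hξℓ := hℓ _ (subset_closure (subset_convexHull ℝ _ ⟨ξ, hξ, rfl⟩))
    have := ξ.toLinearMap.apply_sum_smul_single ℓ.toLinearMap x
    simp only [AlgHom.toLinearMap_apply, ContinuousLinearMap.coe_coe] at this
    simp only [g, map_sub, map_smul, map_one, this, smul_eq_mul, mul_one]
    linarith
  let gU : relaxSpace h W := u • ⟨1, h1⟩ - ∑ i, ℓ (Pi.single i 1) • ⟨x i, hx i⟩
  have hgU : (gU : A) = g := by simp [gU, g]
  have hμg := hμ gU (hgU ▸ hW g hgL hgK)
  have := μ.apply_sum_smul_single ℓ.toLinearMap fun i => ⟨x i, hx i⟩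
  simp only [ContinuousLinearMap.coe_coe] at this
  simp only [gU, map_sub, map_smul, hμ1, this, smul_eq_mul, mul_one] at hμg
  linarith

theorem isMomentRelaxationExact_of_isStable {h : Fin (r+1) → A} (h0 : h 0 = 1)
    (hstab : IsStable h) {n : ℕ} (x : Fin n → A) : IsMomentRelaxationExact h x := by
  let L := span ℝ (insert 1 (range x))
  have hL : FiniteDimensional ℝ L := .span_of_finite ℝ ((finite_range x).insert 1)
  obtain ⟨W₀, hW₀, hW₀L⟩ := hstab L hL
  let W := fun i => W₀ i ⊔ L
  have hLU : ∀ a ∈ L, a ∈ relaxSpace h W := fun a ha => by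
    simpa [h0] using mul_mem_relaxSpace (h := h) (i := 0) (W := W) (mem_sup_right ha)
      (mem_sup_right (subset_span (mem_insert 1 _)))
  have h1 : (1 : A) ∈ relaxSpace h W := hLU 1 (subset_span (mem_insert _ _))
  have hx : ∀ i, x i ∈ relaxSpace h W := fun i =>
    hLU _ (subset_span (mem_insert_of_mem _ ⟨i, rfl⟩))
  refine ⟨W, fun i => have := hW₀ i; inferInstance, h1, hx,
    (closure_mono (convexHull_image_subset_relaxSet x h W h1 hx)).antisymm ?_⟩
  exact closure_minimal (relaxSet_subset_closure_convexHull fun f hfL hfK =>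
    truncQuadModule_mono (fun i => le_sup_left) (hW₀L f hfK hfL)) isClosed_closure

theorem apply_nonneg_of_closure_convexHull_eq {n : ℕ} {x : Fin n → A} {h : Fin (r+1) → A}
    {W₀ W : Fin (r+1) → Submodule ℝ A} (hW₀W : ∀ i, W₀ i ≤ W i)
    {h1 : (1 : A) ∈ relaxSpace h W₀} {hx : ∀ i, x i ∈ relaxSpace h W₀}
    (hclosure : closure (convexHull ℝ
        ((fun ξ : A →ₐ[ℝ] ℝ => fun i => ξ (x i)) '' {ξ | ∀ i, 0 ≤ ξ (h i)}))
      = closure (relaxSet x h W₀ h1 hx))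
    {a : Fin n → ℝ} (hf : ∀ ξ : A →ₐ[ℝ] ℝ, (∀ i, 0 ≤ ξ (h i)) → 0 ≤ ξ (∑ i, a i • x i))
    {μ : Module.Dual ℝ (relaxSpace h W)}
    (hμ : ∀ g ∈ {g : relaxSpace h W | (g : A) ∈ truncQuadModule h W}, 0 ≤ μ g)
    (hμ1 : μ ⟨1, relaxSpace_mono hW₀W h1⟩ = 1) :
    0 ≤ μ (∑ i, a i • ⟨x i, relaxSpace_mono hW₀W (hx i)⟩) := by
  let ℓ : (Fin n → ℝ) →ₗ[ℝ] ℝ := Fintype.linearCombination ℝ a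
  have hℓ : ∀ i, ℓ (Pi.single i 1) = a i := fun i => by
    simp [ℓ, Fintype.linearCombination_apply_single]
  have hμf := μ.apply_sum_smul_single ℓ fun i => ⟨x i, relaxSpace_mono hW₀W (hx i)⟩
  simp only [hℓ] at hμf
  rw [hμf]
  refine ℓ.nonneg_of_mem_closure_convexHull ?_
    (hclosure ▸ subset_closure (relaxSet_anti hW₀W ⟨μ, hμ, hμ1, fun _ => rfl⟩))
  rintro _ ⟨ξ, hξ, rfl⟩
  have hξf := ξ.toLinearMap.apply_sum_smul_single ℓ x
  simp only [hℓ, AlgHom.toLinearMap_apply] at hξf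
  exact hξf ▸ hf ξ hξ

theorem isStable_of_isMomentRelaxationExact [IsReduced A] {h : Fin (r+1) → A} (h0 : h 0 = 1)
    (hdense : ∀ f : A, (∀ ξ : A →ₐ[ℝ] ℝ, (∀ i, 0 ≤ ξ (h i)) → ξ f = 0) → f = 0)
    (hexact : ∀ (n : ℕ) (x : Fin n → A), IsMomentRelaxationExact h x) : IsStable h := by
  intro L hL
  obtain ⟨n, x, rfl⟩ := fg_iff_exists_fin_generating_family.mp (Module.Finite.iff_fg.mp hL)
  obtain ⟨W₀, hW₀, h1, hx, hclosure⟩ := hexact n x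
  let W := fun i => W₀ i ⊔ span ℝ {1}
  have hW₀W : ∀ i, W₀ i ≤ W i := fun i => le_sup_left
  have hW : ∀ i, FiniteDimensional ℝ (W i) := fun i => have := hW₀ i; inferInstance
  refine ⟨W, hW, fun f hfK hfL => ?_⟩
  by_contra hfM
  obtain ⟨ξ₀, hξ₀, -⟩ : ∃ ξ₀ : A →ₐ[ℝ] ℝ, (∀ i, 0 ≤ ξ₀ (h i)) ∧ ξ₀ f ≠ 0 := by
    by_contra! hK
    exact hfM (hdense f hK ▸ zero_mem (truncQuadCone h W))
  obtain ⟨a, rfl⟩ := (mem_span_range_iff_exists_fun ℝ).mp hfL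
  let fU : relaxSpace h W := ∑ i, a i • ⟨x i, relaxSpace_mono hW₀W (hx i)⟩
  obtain ⟨μ, hμ, hμf⟩ := exists_dual_nonneg_of_notMem_truncQuadModule hdense hW (f := fU)
    (by simpa [fU] using hfM)
  let ν : Module.Dual ℝ (relaxSpace h W) := ξ₀.toLinearMap ∘ₗ (relaxSpace h W).subtype
  have h1M : (⟨1, relaxSpace_mono hW₀W h1⟩ : relaxSpace h W) ∈
      {g : relaxSpace h W | (g : A) ∈ truncQuadModule h W} :=
    one_mem_truncQuadModule h0 (mem_sup_right (mem_span_singleton_self 1))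
  exact hμf.not_ge (Module.Dual.apply_nonneg_of_forall_normalized h1M (ν := ν)
    (fun g hg => ξ₀.apply_nonneg_of_mem_truncQuadModule hξ₀ hg) (by simp [ν])
    (fun _ => apply_nonneg_of_closure_convexHull_eq hW₀W hclosure hfK) hμ)

end Stability

theorem moment_relaxation_exact_for_all_morphisms_iff_stable_general
    {A : Type} [CommRing A] [Algebra ℝ A] [IsReduced A]
    {r : ℕ} (h : Fin (r+1) → A) (h0 : h 0 = 1)
    (K : Set (A →ₐ[ℝ] ℝ)) (hK : K = {ξ | ∀ i, 0 ≤ ξ (h i)})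
    (hdense : ∀ f : A, (∀ ξ ∈ K, ξ f = 0) → f = 0) :
    -- (i)
    ((∀ (n : ℕ) (x : Fin n → A),
      ∃ W : Fin (r+1) → Submodule ℝ A, (∀ i, FiniteDimensional ℝ ↥(W i)) ∧
        ∃ (h1 : (1:A) ∈ relaxSpace h W) (hx : ∀ i, x i ∈ relaxSpace h W),
          closure (convexHull ℝ ((fun ξ : A →ₐ[ℝ] ℝ => fun i => ξ (x i)) '' K))
            = closure (relaxSet x h W h1 hx))
    -- (ii)
    ↔ (∀ L : Submodule ℝ A, FiniteDimensional ℝ ↥L →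
        ∃ W : Fin (r+1) → Submodule ℝ A, (∀ i, FiniteDimensional ℝ ↥(W i)) ∧
          ∀ f : A, (∀ ξ ∈ K, 0 ≤ ξ f) → f ∈ L → f ∈ truncQuadModule h W)) := by
  subst hK
  exact ⟨isStable_of_isMomentRelaxationExact h0 hdense,
    fun hstab _ => isMomentRelaxationExact_of_isStable h0 hstab⟩

/-- **Corollary.** Let `V` be an affine ℝ-variety with coordinate ring `A`, let
`K ⊆ V(ℝ)` be a basic closed semialgebraic set, Zariski dense in `V`, and assume the
saturated preordering `𝒫(K)` is finitely generated, say `𝒫(K) = Σh₀ + ⋯ + Σh_r` with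
`h₀ = 1`. Then the following are equivalent:
(i) for every `n` and every morphism `φ : V → 𝔸ⁿ` (given by `x₁, …, x_n ∈ A`), the moment
relaxation for the closed convex hull of `φ(K)` becomes exact for some tuple `W` of
finite-dimensional subspaces;
(ii) the preordering `𝒫(K)` is stable: for every finite-dimensional subspace `L ⊆ A`
there is a tuple `W` of finite-dimensional subspaces with `𝒫(K) ∩ L ⊆ M_W`. -/
theorem moment_relaxation_exact_for_all_morphisms_iff_stable
    {A : Type} [CommRing A] [Algebra ℝ A] [Algebra.FiniteType ℝ A] [IsReduced A]
    {r : ℕ} (h : Fin (r+1) → A) (h0 : h 0 = 1)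
    (K : Set (A →ₐ[ℝ] ℝ)) (hK : K = {ξ | ∀ i, 0 ≤ ξ (h i)})
    (hdense : ∀ f : A, (∀ ξ ∈ K, ξ f = 0) → f = 0)
    (hfg : {f : A | ∀ ξ ∈ K, 0 ≤ ξ f} = quadModule h) :
    -- (i)
    ((∀ (n : ℕ) (x : Fin n → A),
      ∃ W : Fin (r+1) → Submodule ℝ A, (∀ i, FiniteDimensional ℝ ↥(W i)) ∧
        ∃ (h1 : (1:A) ∈ relaxSpace h W) (hx : ∀ i, x i ∈ relaxSpace h W),
          closure (convexHull ℝ ((fun ξ : A →ₐ[ℝ] ℝ => fun i => ξ (x i)) '' K))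
            = closure (relaxSet x h W h1 hx))
    -- (ii)
    ↔ (∀ L : Submodule ℝ A, FiniteDimensional ℝ ↥L →
        ∃ W : Fin (r+1) → Submodule ℝ A, (∀ i, FiniteDimensional ℝ ↥(W i)) ∧
          ∀ f : A, (∀ ξ ∈ K, 0 ≤ ξ f) → f ∈ L → f ∈ truncQuadModule h W)) :=
  moment_relaxation_exact_for_all_morphisms_iff_stable_general h h0 K hK hdense
end

section
/- Let f, g ∈ B'[x, y] be polynomials such that the coefficient-wise reduced polynomials f̄, ḡ ∈ ℂ[x, y] are not identically zero. Assume f(0,0) = g(0,0) = 0, and assume that the curves f̄ = 0 and ḡ = 0 in ℂ² intersect transversally at (0,0). Then the curves f = 0 and g = 0 in R'² intersect transversally at (0,0), and they do not intersect in any point (a, b) ≠ (0,0) with a, b ∈ m'. -/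
open scoped TensorProduct

/-- A real closed field: an ordered field in which every nonnegative element is a square
and every odd-degree polynomial has a root. -/
class IsRealClosedField (R : Type*) [Field R] [LinearOrder R] [IsStrictOrderedRing R] : Prop where
  exists_sqrt : ∀ {x : R}, 0 ≤ x → ∃ y : R, y * y = x
  exists_root_of_odd_natDegree : ∀ p : Polynomial R, Odd p.natDegree → ∃ x : R, p.IsRoot x

section Bounded

variable (R : Type) [Field R] [LinearOrder R] [IsStrictOrderedRing R] [Algebra ℝ R]

lemma algebraMap_real_mono : Monotone (algebraMap ℝ R) := by
  intro a b hab
  have h : algebraMap ℝ R (b - a) = algebraMap ℝ R (Real.sqrt (b - a)) ^ 2 := by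
    rw [← map_pow, Real.sq_sqrt (by linarith)]
  have h0 : (0 : R) ≤ algebraMap ℝ R (b - a) := by rw [h]; positivity
  rw [map_sub] at h0
  linarith

/-- The convex hull `B` of `ℝ` in `R`: the valuation subring of bounded elements,
realized as an ℝ-subalgebra. -/
def boundedSubalgebra : Subalgebra ℝ R where
  carrier := {x | ∃ c : ℝ, |x| ≤ algebraMap ℝ R c}
  add_mem' := by
    rintro x y ⟨c, hc⟩ ⟨d, hd⟩
    exact ⟨c + d, by
      rw [map_add]
      exact (abs_add_le x y).trans (add_le_add hc hd)⟩
  mul_mem' := by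
    rintro x y ⟨c, hc⟩ ⟨d, hd⟩
    refine ⟨c * d, ?_⟩
    rw [map_mul, abs_mul]
    exact mul_le_mul hc hd (abs_nonneg y) ((abs_nonneg x).trans hc)
  algebraMap_mem' := fun c => ⟨|c|, abs_le.mpr ⟨by
      rw [← map_neg]
      exact algebraMap_real_mono R (neg_abs_le c),
    algebraMap_real_mono R (le_abs_self c)⟩⟩

/-- `x ∈ R` is infinitesimal: `|x| < c` for every positive real `c`.  The infinitesimal
elements of `B` form the maximal ideal `m` of the valuation ring `B`, with `B/m = ℝ`. -/
def Infinitesimal (x : R) : Prop :=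
  ∀ c : ℝ, 0 < c → |x| < algebraMap ℝ R c

end Bounded

section Bprime

variable (R : Type) [Field R] [LinearOrder R] [IsStrictOrderedRing R] [Algebra ℝ R]
variable (i' : AlgebraicClosure R) (hi' : i' * i' = -1)

/-- `B' = B[√-1]`: the valuation ring of `R' = R(√-1)` (the algebraic closure of `R`)
extending the convex hull `B` of `ℝ` in `R`; its residue field is `ℂ`. -/
def boundedSubringC : Subring (AlgebraicClosure R) where
  carrier := {z | ∃ a b : R, a ∈ boundedSubalgebra R ∧ b ∈ boundedSubalgebra R ∧
    z = algebraMap R (AlgebraicClosure R) a + algebraMap R (AlgebraicClosure R) b * i'}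
  zero_mem' := ⟨0, 0, zero_mem _, zero_mem _, by simp⟩
  one_mem' := ⟨1, 0, one_mem _, zero_mem _, by simp⟩
  add_mem' := by
    rintro x y ⟨a, b, ha, hb, rfl⟩ ⟨c, d, hc, hd, rfl⟩
    exact ⟨a + c, b + d, add_mem ha hc, add_mem hb hd, by rw [map_add, map_add]; ring⟩
  neg_mem' := by
    rintro x ⟨a, b, ha, hb, rfl⟩
    exact ⟨-a, -b, neg_mem ha, neg_mem hb, by rw [map_neg, map_neg]; ring⟩
  mul_mem' := by
    rintro x y ⟨a, b, ha, hb, rfl⟩ ⟨c, d, hc, hd, rfl⟩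
    refine ⟨a * c - b * d, a * d + b * c, sub_mem (mul_mem ha hc) (mul_mem hb hd),
      add_mem (mul_mem ha hd) (mul_mem hb hc), ?_⟩
    simp only [map_sub, map_add, map_mul]
    linear_combination (algebraMap R (AlgebraicClosure R) b *
      algebraMap R (AlgebraicClosure R) d) * hi'

/-- The canonical inclusion `ℝ → B'`. -/
noncomputable def realToBc : ℝ →+* ↥(boundedSubringC R i' hi') where
  toFun c := ⟨algebraMap R (AlgebraicClosure R) (algebraMap ℝ R c),
    ⟨algebraMap ℝ R c, 0, (boundedSubalgebra R).algebraMap_mem c, zero_mem _, by simp⟩⟩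
  map_one' := by ext; simp
  map_mul' x y := by ext; simp
  map_zero' := by ext; simp
  map_add' x y := by ext; simp

end Bprime

/-!
`B'` is a valuation ring, so of two elements `a, b ∈ m'`, not both zero, one divides the
other: `(a, b) = c • (u, v)` with `c ∈ m'` nonzero and `u = 1` or `v = 1`. Expanding at the
origin, `f(cu, cv) = c (f_x u + f_y v) + c² w`; if `(a, b)` is a common zero, cancelling `c`
and reducing modulo `m'` puts the nonzero vector `(ū, v̄)` in the kernel of the reduced
Jacobian matrix at the origin, so its determinant vanishes, against transversality.
The first claim holds because the Jacobian determinant of `f, g` reduces to that of `f̄, ḡ`.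
-/

namespace MvPolynomial

section Taylor

variable {σ S : Type*} [CommRing S] (x : σ → S)

theorem eval_sub_constantCoeff_mem_span_range (p : MvPolynomial σ S) :
    eval x p - constantCoeff p ∈ Ideal.span (Set.range x) := by
  induction p using MvPolynomial.induction_on with
  | C a => simp
  | add p q hp hq => simpa only [map_add, add_sub_add_comm] using add_mem hp hq
  | mul_X p i _ =>
    simpa using Ideal.mul_mem_left _ (eval x p) (Ideal.subset_span (Set.mem_range_self i))

theorem eval_sub_linearPart_mem_span_range_sq [Fintype σ] (p : MvPolynomial σ S) :
    eval x p - constantCoeff p - ∑ i, constantCoeff (pderiv i p) * x i ∈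
      Ideal.span (Set.range x) ^ 2 := by
  classical
  induction p using MvPolynomial.induction_on with
  | C a => simp
  | add p q hp hq =>
    simpa only [map_add, add_mul, Finset.sum_add_distrib, add_sub_add_comm] using add_mem hp hq
  | mul_X p j _ =>
    have hlin : ∑ i, constantCoeff (pderiv i (p * X j)) * x i = constantCoeff p * x j := by
      simp [pderiv_X, Pi.single_apply, apply_ite constantCoeff, ite_mul]
    rw [hlin, eval_mul, eval_X, map_mul, constantCoeff_X, mul_zero, sub_zero, ← sub_mul, sq]
    exact Ideal.mul_mem_mul (eval_sub_constantCoeff_mem_span_range x p)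
      (Ideal.subset_span (Set.mem_range_self j))

theorem exists_eval_smul_eq [Fintype σ] (p : MvPolynomial σ S) (c : S) (y : σ → S) :
    ∃ w, eval (c • y) p =
      constantCoeff p + c * ∑ i, constantCoeff (pderiv i p) * y i + c ^ 2 * w := by
  have hspan : Ideal.span (Set.range (c • y)) ^ 2 ≤ Ideal.span {c ^ 2} := by
    rw [← Ideal.span_singleton_pow]
    refine Ideal.pow_right_mono (Ideal.span_le.mpr ?_) 2
    rintro _ ⟨i, rfl⟩
    exact Ideal.mul_mem_right _ _ (Ideal.mem_span_singleton_self c)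
  obtain ⟨w, hw⟩ :=
    Ideal.mem_span_singleton'.mp (hspan (eval_sub_linearPart_mem_span_range_sq (c • y) p))
  have hsum : ∑ i, constantCoeff (pderiv i p) * (c • y) i =
      c * ∑ i, constantCoeff (pderiv i p) * y i := by
    rw [Finset.mul_sum]
    exact Finset.sum_congr rfl fun i _ => by rw [Pi.smul_apply, smul_eq_mul]; ring
  exact ⟨w, by linear_combination -hw + hsum⟩

end Taylor

noncomputable def jacobianDetAtZero {S : Type*} [CommRing S] (f g : MvPolynomial (Fin 2) S) :
    S :=
  eval (fun _ => 0) (pderiv 0 f) * eval (fun _ => 0) (pderiv 1 g) -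
    eval (fun _ => 0) (pderiv 1 f) * eval (fun _ => 0) (pderiv 0 g)

section Reduction

variable {A K : Type*} [CommRing A] [CommRing K] (π : A →+* K)

theorem map_jacobianDetAtZero (f g : MvPolynomial (Fin 2) A) :
    π (jacobianDetAtZero f g) = jacobianDetAtZero (map π f) (map π g) := by
  simp [jacobianDetAtZero, pderiv_map, constantCoeff_map]

variable [IsDomain A]

theorem map_linearPart_eq_zero_of_eval_smul_eq_zero {σ : Type*} [Fintype σ]
    {p : MvPolynomial σ A} (hp0 : constantCoeff p = 0) {c : A} (hc : c ≠ 0) (hπc : π c = 0)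
    {y : σ → A} (hpy : eval (c • y) p = 0) :
    ∑ i, π (constantCoeff (pderiv i p)) * π (y i) = 0 := by
  obtain ⟨w, hw⟩ := exists_eval_smul_eq p c y
  have hcancel : ∑ i, constantCoeff (pderiv i p) * y i + c * w = 0 := by
    refine (mul_eq_zero.mp ?_).resolve_left hc
    linear_combination -hw + hpy - hp0
  simpa [hπc] using congrArg π hcancel

variable [IsDomain K]

theorem mul_sub_mul_eq_zero_of_mul_add_mul_eq_zero {a b c d u v : K}
    (h₁ : a * u + b * v = 0) (h₂ : c * u + d * v = 0) (huv : u ≠ 0 ∨ v ≠ 0) :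
    a * d - b * c = 0 := by
  have hu : u * (a * d - b * c) = 0 := by linear_combination d * h₁ - b * h₂
  have hv : v * (a * d - b * c) = 0 := by linear_combination a * h₂ - c * h₁
  rcases huv with hu0 | hv0
  · exact (mul_eq_zero.mp hu).resolve_left hu0
  · exact (mul_eq_zero.mp hv).resolve_left hv0

theorem map_jacobianDetAtZero_eq_zero_of_eval_smul_eq_zero {f g : MvPolynomial (Fin 2) A}
    (hf0 : constantCoeff f = 0) (hg0 : constantCoeff g = 0) {c : A} (hc : c ≠ 0)
    (hπc : π c = 0) {y : Fin 2 → A} (hy : π (y 0) ≠ 0 ∨ π (y 1) ≠ 0)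
    (hf : eval (c • y) f = 0) (hg : eval (c • y) g = 0) :
    π (jacobianDetAtZero f g) = 0 := by
  have hfy := map_linearPart_eq_zero_of_eval_smul_eq_zero π hf0 hc hπc hf
  have hgy := map_linearPart_eq_zero_of_eval_smul_eq_zero π hg0 hc hπc hg
  rw [Fin.sum_univ_two] at hfy hgy
  simpa [jacobianDetAtZero] using mul_sub_mul_eq_zero_of_mul_add_mul_eq_zero hfy hgy hy

theorem map_jacobianDetAtZero_eq_zero_of_common_zero [ValuationRing A]
    {f g : MvPolynomial (Fin 2) A} (hf0 : constantCoeff f = 0) (hg0 : constantCoeff g = 0)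
    {a b : A} (ha : π a = 0) (hb : π b = 0) (hab : ¬(a = 0 ∧ b = 0))
    (hf : eval ![a, b] f = 0) (hg : eval ![a, b] g = 0) :
    π (jacobianDetAtZero f g) = 0 := by
  rcases ValuationRing.dvd_total a b with ⟨t, rfl⟩ | ⟨t, rfl⟩
  · have ha0 : a ≠ 0 := by rintro rfl; simp at hab
    have hpt : ![a, a * t] = a • ![1, t] := by simp
    rw [hpt] at hf hg
    exact map_jacobianDetAtZero_eq_zero_of_eval_smul_eq_zero π hf0 hg0 ha0 ha (by simp) hf hg
  · have hb0 : b ≠ 0 := by rintro rfl; simp at hab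
    have hpt : ![b * t, b] = b • ![t, 1] := by simp
    rw [hpt] at hf hg
    exact map_jacobianDetAtZero_eq_zero_of_eval_smul_eq_zero π hf0 hg0 hb0 hb (by simp) hf hg

end Reduction

end MvPolynomial

section BoundedSubringC

variable {R : Type} [Field R] [LinearOrder R] [IsStrictOrderedRing R] [Algebra ℝ R]
  {i' : AlgebraicClosure R} {hi' : i' * i' = -1}

/- The quotient is `b / a = (r + s i') (p - q i') / (p² + q²)`; by Cauchy–Schwarz both of its
coordinates have absolute value at most `1`. -/
theorem boundedSubringC_dvd_of_sq_add_sq_le {a b : boundedSubringC R i' hi'} {p q r s : R}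
    (ha : (a : AlgebraicClosure R) =
      algebraMap R (AlgebraicClosure R) p + algebraMap R (AlgebraicClosure R) q * i')
    (hb : (b : AlgebraicClosure R) =
      algebraMap R (AlgebraicClosure R) r + algebraMap R (AlgebraicClosure R) s * i')
    (hle : r ^ 2 + s ^ 2 ≤ p ^ 2 + q ^ 2) : a ∣ b := by
  rcases (add_nonneg (sq_nonneg p) (sq_nonneg q)).eq_or_lt with hN | hN
  · have hr : r = 0 := by nlinarith
    have hs : s = 0 := by nlinarith
    have hb0 : b = 0 := Subtype.ext (by simp [hb, hr, hs])
    exact hb0 ▸ dvd_zero a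
  set N := p ^ 2 + q ^ 2
  have hcs : (r * p + s * q) ^ 2 + (s * p - r * q) ^ 2 ≤ N ^ 2 := by
    nlinarith [mul_le_mul_of_nonneg_right hle hN.le]
  have hbdd : ∀ z : R, z ^ 2 ≤ N ^ 2 → z / N ∈ boundedSubalgebra R := fun z hz =>
    ⟨1, by rw [map_one, abs_div, abs_of_pos hN, div_le_one hN]; exact abs_le_of_sq_le_sq hz hN.le⟩
  have hre : r = p * ((r * p + s * q) / N) - q * ((s * p - r * q) / N) := by field_simp; ring
  have him : s = p * ((s * p - r * q) / N) + q * ((r * p + s * q) / N) := by field_simp; ring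
  set x := (r * p + s * q) / N
  set y := (s * p - r * q) / N
  have ht : algebraMap R (AlgebraicClosure R) x + algebraMap R (AlgebraicClosure R) y * i' ∈
      boundedSubringC R i' hi' :=
    ⟨x, y, hbdd _ (by nlinarith [sq_nonneg (s * p - r * q)]),
      hbdd _ (by nlinarith [sq_nonneg (r * p + s * q)]), rfl⟩
  refine ⟨⟨_, ht⟩, Subtype.ext ?_⟩
  simp only [Subring.coe_mul, ha, hb]
  rw [hre, him]
  simp only [map_add, map_sub, map_mul]
  linear_combination
    -(algebraMap R (AlgebraicClosure R) q * algebraMap R (AlgebraicClosure R) y) * hi'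

instance : ValuationRing (boundedSubringC R i' hi') where
  cond' a b := by
    obtain ⟨p, q, -, -, ha⟩ := a.2
    obtain ⟨r, s, -, -, hb⟩ := b.2
    rcases le_total (r ^ 2 + s ^ 2) (p ^ 2 + q ^ 2) with h | h
    · obtain ⟨c, hc⟩ := boundedSubringC_dvd_of_sq_add_sq_le ha hb h
      exact ⟨c, .inl hc.symm⟩
    · obtain ⟨c, hc⟩ := boundedSubringC_dvd_of_sq_add_sq_le hb ha h
      exact ⟨c, .inr hc.symm⟩

end BoundedSubringC

open MvPolynomial in
theorem plane_curves_transversal_of_reduction_transversal_general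
    (R : Type) [Field R] [LinearOrder R] [IsStrictOrderedRing R] [Algebra ℝ R]
    (i' : AlgebraicClosure R) (hi' : i' * i' = -1)
    (π' : ↥(boundedSubringC R i' hi') →+* ℂ)
    (f g : MvPolynomial (Fin 2) ↥(boundedSubringC R i' hi'))
    (hf0 : eval (fun _ => (0 : ↥(boundedSubringC R i' hi'))) f = 0)
    (hg0 : eval (fun _ => (0 : ↥(boundedSubringC R i' hi'))) g = 0)
    (htrans :
      eval (fun _ => (0:ℂ)) (pderiv 0 (MvPolynomial.map π' f)) *
          eval (fun _ => (0:ℂ)) (pderiv 1 (MvPolynomial.map π' g)) -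
        eval (fun _ => (0:ℂ)) (pderiv 1 (MvPolynomial.map π' f)) *
          eval (fun _ => (0:ℂ)) (pderiv 0 (MvPolynomial.map π' g)) ≠ 0) :
    (eval (fun _ => (0 : ↥(boundedSubringC R i' hi'))) (pderiv 0 f) *
        eval (fun _ => (0 : ↥(boundedSubringC R i' hi'))) (pderiv 1 g) -
      eval (fun _ => (0 : ↥(boundedSubringC R i' hi'))) (pderiv 1 f) *
        eval (fun _ => (0 : ↥(boundedSubringC R i' hi'))) (pderiv 0 g) ≠ 0) ∧
    ∀ a b : ↥(boundedSubringC R i' hi'), π' a = 0 → π' b = 0 → ¬(a = 0 ∧ b = 0) →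
      ¬(eval ![a, b] f = 0 ∧ eval ![a, b] g = 0) := by
  change jacobianDetAtZero (map π' f) (map π' g) ≠ 0 at htrans
  rw [← map_jacobianDetAtZero] at htrans
  rw [eval_zero'] at hf0 hg0
  refine ⟨fun h => htrans ?_, fun a b ha hb hab ⟨hfab, hgab⟩ => htrans ?_⟩
  · exact (congrArg π' h).trans (map_zero π')
  · exact map_jacobianDetAtZero_eq_zero_of_common_zero π' hf0 hg0 ha hb hab hfab hgab

open MvPolynomial in
/-- **Lemma.** Let `f, g ∈ B'[x,y]` with coefficientwise reductions `f̄, ḡ ∈ ℂ[x,y]` not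
identically zero (`π' : B' → B'/m' = ℂ` being the residue map).  Assume
`f(0,0) = g(0,0) = 0` and that the curves `f̄ = 0` and `ḡ = 0` intersect transversally at
`(0,0)` (independence of gradients).  Then `f = 0` and `g = 0` intersect transversally at
`(0,0)` in `R'²`, and they have no common zero `(a,b) ≠ (0,0)` with `a, b ∈ m'`. -/
theorem plane_curves_transversal_of_reduction_transversal
    (R : Type) [Field R] [LinearOrder R] [IsStrictOrderedRing R] [IsRealClosedField R] [Algebra ℝ R]
    (i' : AlgebraicClosure R) (hi' : i' * i' = -1)
    (π' : ↥(boundedSubringC R i' hi') →+* ℂ)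
    (hπ'1 : ∀ c : ℝ, π' (realToBc R i' hi' c) = (c : ℂ))
    (hπ'0 : ∀ z : ↥(boundedSubringC R i' hi'),
      (∃ (a : R), Infinitesimal R a ∧
        (z : AlgebraicClosure R) = algebraMap R (AlgebraicClosure R) a) → π' z = 0)
    (f g : MvPolynomial (Fin 2) ↥(boundedSubringC R i' hi'))
    (hfbar : MvPolynomial.map π' f ≠ 0) (hgbar : MvPolynomial.map π' g ≠ 0)
    (hf0 : eval (fun _ => (0 : ↥(boundedSubringC R i' hi'))) f = 0)
    (hg0 : eval (fun _ => (0 : ↥(boundedSubringC R i' hi'))) g = 0)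
    (htrans :
      eval (fun _ => (0:ℂ)) (pderiv 0 (MvPolynomial.map π' f)) *
          eval (fun _ => (0:ℂ)) (pderiv 1 (MvPolynomial.map π' g)) -
        eval (fun _ => (0:ℂ)) (pderiv 1 (MvPolynomial.map π' f)) *
          eval (fun _ => (0:ℂ)) (pderiv 0 (MvPolynomial.map π' g)) ≠ 0) :
    (eval (fun _ => (0 : ↥(boundedSubringC R i' hi'))) (pderiv 0 f) *
        eval (fun _ => (0 : ↥(boundedSubringC R i' hi'))) (pderiv 1 g) -
      eval (fun _ => (0 : ↥(boundedSubringC R i' hi'))) (pderiv 1 f) *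
        eval (fun _ => (0 : ↥(boundedSubringC R i' hi'))) (pderiv 0 g) ≠ 0) ∧
    ∀ a b : ↥(boundedSubringC R i' hi'), π' a = 0 → π' b = 0 → ¬(a = 0 ∧ b = 0) →
      ¬(eval ![a, b] f = 0 ∧ eval ![a, b] g = 0) :=
  plane_curves_transversal_of_reduction_transversal_general R i' hi' π' f g hf0 hg0 htrans
end

section
/- Let C be a nonsingular affine curve over ℝ, let K ⊆ C(ℝ) be a compact semialgebraic set, and let T = 𝒫(K) be the saturated preordering of K in ℝ[C]. Then the preordering T_B generated by T in B[C] = ℝ[C] ⊗ B is archimedean; that is, for every f ∈ B[C] there exists a positive real number c with c − f ∈ T_B. -/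
/-!
On `K` every `a ∈ ℝ[C]` is bounded by compactness, so `c ± a ∈ T` for some real `c`; every
`b ∈ B` satisfies `|b| ≤ d` for some real `d`, and `d ± b` is a square in `B` because `R` is
real closed. The identity `cd - ab = ½((c - a)(d + b) + (c + a)(d - b))` then bounds every pure
tensor `a ⊗ b`, and bounds add up over sums of pure tensors.
-/

open scoped TensorProduct

section SemialgebraicOnVariety

variable {A : Type} [CommRing A] [Algebra ℝ A]

/-- The semialgebraic subset of `C(ℝ) = Hom_ℝ(A, ℝ)` defined by a finite description `D`
(a finite union of basic sets given by equations and strict inequalities). -/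
def saRealization (D : Finset (Finset A × Finset A)) : Set (A →ₐ[ℝ] ℝ) :=
  {ξ | ∃ d ∈ D, (∀ p ∈ d.1, ξ p = 0) ∧ ∀ q ∈ d.2, 0 < ξ q}

/-- The saturated preordering `𝒫(K) = {f ∈ A : f|_K ≥ 0}` of a subset `K ⊆ C(ℝ)`. -/
def saturatedPreordering (K : Set (A →ₐ[ℝ] ℝ)) : Set A :=
  {f | ∀ ξ ∈ K, 0 ≤ ξ f}

end SemialgebraicOnVariety

/-- The preordering generated by a subset `S` of a commutative ring: the smallest subset
containing `S` and all squares and closed under addition and multiplication. -/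
inductive PreorderingGen {A : Type} [CommRing A] (S : Set A) : A → Prop
  | of {a : A} : a ∈ S → PreorderingGen S a
  | sq (a : A) : PreorderingGen S (a * a)
  | add {a b : A} : PreorderingGen S a → PreorderingGen S b → PreorderingGen S (a + b)
  | mul {a b : A} : PreorderingGen S a → PreorderingGen S b → PreorderingGen S (a * b)

namespace PreorderingGen

variable {E : Type} [CommRing E] [Algebra ℝ E] {S : Set E}

theorem algebraMap_mem {c : ℝ} (hc : 0 ≤ c) : PreorderingGen S (algebraMap ℝ E c) := by
  rw [← Real.mul_self_sqrt hc, map_mul]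
  exact .sq _

theorem algebraMap_mul_sub_mul_mem {c d : ℝ} {x y : E}
    (hcx : PreorderingGen S (algebraMap ℝ E c - x)) (hxc : PreorderingGen S (algebraMap ℝ E c + x))
    (hdy : PreorderingGen S (algebraMap ℝ E d - y)) (hyd : PreorderingGen S (algebraMap ℝ E d + y)) :
    PreorderingGen S (algebraMap ℝ E (c * d) - x * y) := by
  have half : algebraMap ℝ E (1 / 2) + algebraMap ℝ E (1 / 2) = 1 := by
    rw [← map_add]; norm_num
  convert (algebraMap_mem (by norm_num : (0 : ℝ) ≤ 1 / 2)).mul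
    ((hcx.mul hyd).add (hxc.mul hdy)) using 1
  rw [map_mul]
  linear_combination (x * y - algebraMap ℝ E c * algebraMap ℝ E d) * half

theorem exists_algebraMap_sub_mem_of_forall_tmul {M N : Type} [CommRing M] [Algebra ℝ M]
    [CommRing N] [Algebra ℝ N] {S : Set (M ⊗[ℝ] N)}
    (htmul : ∀ (a : M) (b : N), ∃ c : ℝ, 0 < c ∧ PreorderingGen S (algebraMap ℝ _ c - a ⊗ₜ b))
    (f : M ⊗[ℝ] N) : ∃ c : ℝ, 0 < c ∧ PreorderingGen S (algebraMap ℝ _ c - f) := by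
  induction f using TensorProduct.induction_on with
  | zero => exact ⟨1, one_pos, by simpa using algebraMap_mem (S := S) zero_le_one⟩
  | tmul a b => exact htmul a b
  | add x y hx hy =>
    obtain ⟨c, hc, hcx⟩ := hx
    obtain ⟨d, hd, hdy⟩ := hy
    refine ⟨c + d, add_pos hc hd, ?_⟩
    convert hcx.add hdy using 1
    rw [map_add]; ring

end PreorderingGen

section SaturatedPreordering

variable {A : Type} [CommRing A] [Algebra ℝ A]

theorem algebraMap_sub_mem_saturatedPreordering {K : Set (A →ₐ[ℝ] ℝ)} {a : A} {c : ℝ}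
    (h : ∀ ξ ∈ K, ξ a ≤ c) : algebraMap ℝ A c - a ∈ saturatedPreordering K := by
  intro ξ hξ
  rw [map_sub, AlgHom.commutes, Algebra.algebraMap_self_apply, sub_nonneg]
  exact h ξ hξ

theorem PreorderingGen.exists_map_bound_of_isCompact {E : Type} [CommRing E] [Algebra ℝ E]
    (φ : A →ₐ[ℝ] E) {K : Set (A →ₐ[ℝ] ℝ)} (hK : IsCompact ((fun ξ : A →ₐ[ℝ] ℝ => (ξ : A → ℝ)) '' K))
    (a : A) : ∃ c : ℝ, 0 < c ∧
      PreorderingGen (φ '' saturatedPreordering K) (algebraMap ℝ E c - φ a) ∧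
      PreorderingGen (φ '' saturatedPreordering K) (algebraMap ℝ E c + φ a) := by
  obtain ⟨c, hc⟩ := hK.exists_bound_of_continuousOn (continuous_apply a).continuousOn
  have hbound : ∀ ξ ∈ K, |ξ a| ≤ max c 1 := fun ξ hξ =>
    (hc _ ⟨ξ, hξ, rfl⟩).trans (le_max_left _ _)
  have hmem : ∀ x : A, algebraMap ℝ A (max c 1) - x ∈ saturatedPreordering K →
      PreorderingGen (φ '' saturatedPreordering K) (algebraMap ℝ E (max c 1) - φ x) := by
    intro x hx
    exact .of ⟨_, hx, by rw [map_sub, AlgHom.commutes]⟩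
  refine ⟨max c 1, lt_max_of_lt_right one_pos, hmem a ?_, ?_⟩
  · exact algebraMap_sub_mem_saturatedPreordering fun ξ hξ => (abs_le.mp (hbound ξ hξ)).2
  · rw [← sub_neg_eq_add, ← map_neg]
    refine hmem (-a) (algebraMap_sub_mem_saturatedPreordering fun ξ hξ => ?_)
    rw [map_neg]
    exact neg_le.mp (abs_le.mp (hbound ξ hξ)).1

end SaturatedPreordering

namespace boundedSubalgebra

variable {R : Type} [Field R] [LinearOrder R] [IsStrictOrderedRing R] [Algebra ℝ R]

theorem exists_abs_le (b : boundedSubalgebra R) :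
    ∃ d : ℝ, 0 < d ∧ |(b : R)| ≤ algebraMap ℝ R d := by
  obtain ⟨d, hd⟩ := b.2
  exact ⟨max d 1, lt_max_of_lt_right one_pos,
    hd.trans (algebraMap_real_mono R (le_max_left _ _))⟩

theorem exists_mul_self_eq [IsRealClosedField R] (x : boundedSubalgebra R) (hx : 0 ≤ (x : R)) :
    ∃ y : boundedSubalgebra R, y * y = x := by
  obtain ⟨y, hy⟩ := IsRealClosedField.exists_sqrt hx
  obtain ⟨d, -, hd⟩ := exists_abs_le x
  have hy_sq : |y| * |y| ≤ algebraMap ℝ R d := by rwa [← abs_mul, hy]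
  have hy_le : |y| ≤ algebraMap ℝ R (d + 1) := by
    rw [map_add, map_one]
    nlinarith [abs_nonneg y]
  exact ⟨⟨y, d + 1, hy_le⟩, Subtype.ext hy⟩

end boundedSubalgebra

theorem PreorderingGen.exists_map_bound_of_boundedSubalgebra {R : Type} [Field R] [LinearOrder R]
    [IsStrictOrderedRing R] [IsRealClosedField R] [Algebra ℝ R] {E : Type} [CommRing E] [Algebra ℝ E] (φ : boundedSubalgebra R →ₐ[ℝ] E) (S : Set E)
    (b : boundedSubalgebra R) : ∃ d : ℝ, 0 < d ∧
      PreorderingGen S (algebraMap ℝ E d - φ b) ∧ PreorderingGen S (algebraMap ℝ E d + φ b) := by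
  obtain ⟨d, hd, hbd⟩ := boundedSubalgebra.exists_abs_le b
  have hsq : ∀ x : boundedSubalgebra R, 0 ≤ (x : R) → PreorderingGen S (φ x) := by
    intro x hx
    obtain ⟨y, rfl⟩ := boundedSubalgebra.exists_mul_self_eq x hx
    rw [map_mul]
    exact .sq _
  have hcoe : ((algebraMap ℝ (boundedSubalgebra R) d : boundedSubalgebra R) : R) =
      algebraMap ℝ R d := rfl
  refine ⟨d, hd, ?_, ?_⟩
  · rw [← AlgHom.commutes φ, ← map_sub]
    refine hsq _ ?_
    rw [Subalgebra.coe_sub, hcoe, sub_nonneg]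
    exact (abs_le.mp hbd).2
  · rw [← AlgHom.commutes φ, ← map_add]
    refine hsq _ ?_
    rw [Subalgebra.coe_add, hcoe]
    linarith [(abs_le.mp hbd).1]

theorem preordering_generated_in_bounded_base_extension_isArchimedean_general
    {A : Type} [CommRing A] [Algebra ℝ A]
    (D : Finset (Finset A × Finset A))
    (hcpt : IsCompact ((fun ξ : A →ₐ[ℝ] ℝ => (ξ : A → ℝ)) '' saRealization D))
    (R : Type) [Field R] [LinearOrder R] [IsStrictOrderedRing R] [IsRealClosedField R] [Algebra ℝ R] :
    ∀ f : A ⊗[ℝ] ↥(boundedSubalgebra R), ∃ c : ℝ, 0 < c ∧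
      PreorderingGen
        ((fun a => (Algebra.TensorProduct.includeLeft :
            A →ₐ[ℝ] A ⊗[ℝ] ↥(boundedSubalgebra R)) a) ''
          saturatedPreordering (saRealization D))
        (algebraMap ℝ (A ⊗[ℝ] ↥(boundedSubalgebra R)) c - f) := by
  refine PreorderingGen.exists_algebraMap_sub_mem_of_forall_tmul fun a b => ?_
  obtain ⟨c, hc, hca, hac⟩ :=
    PreorderingGen.exists_map_bound_of_isCompact
      (Algebra.TensorProduct.includeLeft : A →ₐ[ℝ] A ⊗[ℝ] boundedSubalgebra R) hcpt a
  obtain ⟨d, hd, hdb, hbd⟩ := PreorderingGen.exists_map_bound_of_boundedSubalgebra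
    (Algebra.TensorProduct.includeRight : boundedSubalgebra R →ₐ[ℝ] A ⊗[ℝ] boundedSubalgebra R) _ b
  refine ⟨c * d, mul_pos hc hd, ?_⟩
  rw [Algebra.TensorProduct.includeLeft_apply] at hca hac
  rw [Algebra.TensorProduct.includeRight_apply] at hdb hbd
  rw [← mul_one a, ← one_mul b, ← Algebra.TensorProduct.tmul_mul_tmul]
  exact PreorderingGen.algebraMap_mul_sub_mul_mem hca hac hdb hbd

/-- **Lemma.** Let `C` be a nonsingular affine curve over `ℝ` (coordinate ring `A`), let
`K ⊆ C(ℝ)` be a compact semialgebraic set and `T = 𝒫(K)` its saturated preordering in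
`ℝ[C] = A`.  Let `R ⊇ ℝ` be a real closed field and `B` the convex hull of `ℝ` in `R`.
Then the preordering `T_B` generated by `T` in `B[C] = A ⊗_ℝ B` is archimedean: for every
`f ∈ A ⊗ B` there is a positive real `c` with `c - f ∈ T_B`. -/
theorem preordering_generated_in_bounded_base_extension_isArchimedean
    {A : Type} [CommRing A] [Algebra ℝ A] [Algebra.FiniteType ℝ A]
    [Algebra.FormallySmooth ℝ A] (hdim : ringKrullDim A = 1)
    (D : Finset (Finset A × Finset A))
    (hcpt : IsCompact ((fun ξ : A →ₐ[ℝ] ℝ => (ξ : A → ℝ)) '' saRealization D))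
    (R : Type) [Field R] [LinearOrder R] [IsStrictOrderedRing R] [IsRealClosedField R] [Algebra ℝ R] :
    ∀ f : A ⊗[ℝ] ↥(boundedSubalgebra R), ∃ c : ℝ, 0 < c ∧
      PreorderingGen
        ((fun a => (Algebra.TensorProduct.includeLeft :
            A →ₐ[ℝ] A ⊗[ℝ] ↥(boundedSubalgebra R)) a) ''
          saturatedPreordering (saRealization D))
        (algebraMap ℝ (A ⊗[ℝ] ↥(boundedSubalgebra R)) c - f) :=
  preordering_generated_in_bounded_base_extension_isArchimedean_general D hcpt R
end
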